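/- Let ε > 0 and δ > 0, and let h : ℝ → ℝ be smooth with h(y) < −ε·|y|^{1+δ} for all y ≤ −1. Let y : [0,T) → ℝ be the maximal solution of y'' = h(y) with y(0) = −1 and y'(0) = −1. Then T < ∞ and lim_{t→T} y(t) = −∞. -/

import Mathlib

open Filter Topology

/-- `y` (with derivative `y'`) solves the ODE `y'' = h(y)` on `[0,T)`. -/
def SolOnIco (h : ℝ → ℝ) (T : ℝ) (y y' : ℝ → ℝ) : Prop :=
  (∀ t ∈ Set.Ico (0:ℝ) T, HasDerivWithinAt y (y' t) (Set.Ico (0:ℝ) T) t) ∧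
  (∀ t ∈ Set.Ico (0:ℝ) T, HasDerivWithinAt y' (h (y t)) (Set.Ico (0:ℝ) T) t)

/-- `y` (with derivative `y'`) solves the ODE `y'' = h(y)` on `[0,∞)`. -/
def SolOnIci (h : ℝ → ℝ) (y y' : ℝ → ℝ) : Prop :=
  (∀ t ∈ Set.Ici (0:ℝ), HasDerivWithinAt y (y' t) (Set.Ici (0:ℝ)) t) ∧
  (∀ t ∈ Set.Ici (0:ℝ), HasDerivWithinAt y' (h (y t)) (Set.Ici (0:ℝ)) t)

namespace BlowupAux
open Set
variable {T ε δ : ℝ} {h y y' : ℝ → ℝ}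

lemma hDy (hsol : SolOnIco h T y y') : ∀ t ∈ Ioo (0:ℝ) T, HasDerivAt y (y' t) t :=
  fun t ht => (hsol.1 t ⟨ht.1.le, ht.2⟩).hasDerivAt (Ico_mem_nhds ht.1 ht.2)
lemma hDy' (hsol : SolOnIco h T y y') : ∀ t ∈ Ioo (0:ℝ) T, HasDerivAt y' (h (y t)) t :=
  fun t ht => (hsol.2 t ⟨ht.1.le, ht.2⟩).hasDerivAt (Ico_mem_nhds ht.1 ht.2)
lemma hCy (hsol : SolOnIco h T y y') : ContinuousOn y (Ico 0 T) :=
  fun t ht => (hsol.1 t ht).continuousWithinAt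
lemma hCy' (hsol : SolOnIco h T y y') : ContinuousOn y' (Ico 0 T) :=
  fun t ht => (hsol.2 t ht).continuousWithinAt

lemma anti_aux {f g : ℝ → ℝ} {a b : ℝ}
    (hf : ContinuousOn f (Icc a b))
    (hd : ∀ x ∈ Ioo a b, HasDerivAt f (g x) x)
    (hg : ∀ x ∈ Ioo a b, g x ≤ 0) : AntitoneOn f (Icc a b) := by
  apply antitoneOn_of_deriv_nonpos (convex_Icc a b) hf
  · intro x hx
    rw [interior_Icc] at hx
    exact (hd x hx).differentiableAt.differentiableWithinAt
  · intro x hx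
    rw [interior_Icc] at hx
    rw [(hd x hx).deriv]
    exact hg x hx

lemma strictAnti_aux {f g : ℝ → ℝ} {a b : ℝ}
    (hf : ContinuousOn f (Icc a b))
    (hd : ∀ x ∈ Ioo a b, HasDerivAt f (g x) x)
    (hg : ∀ x ∈ Ioo a b, g x < 0) : StrictAntiOn f (Icc a b) := by
  apply strictAntiOn_of_deriv_neg (convex_Icc a b) hf
  intro x hx
  rw [interior_Icc] at hx
  rw [(hd x hx).deriv]
  exact hg x hx

lemma stepA (hcont : Continuous h)
    (hneg : ∀ u : ℝ, u ≤ -1 → h u < 0)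
    (hsol : SolOnIco h T y y') (hy0 : y 0 = -1) (hy'0 : y' 0 = -1) :
    ∀ t ∈ Set.Ico (0:ℝ) T, y t ≤ -1 ∧ y' t ≤ -1 := by
  have key : ∀ t ∈ Ico (0:ℝ) T, ∀ s ∈ Icc (0:ℝ) t, y' s ≤ -1 := by
    intro t ht
    by_contra hB
    push_neg at hB
    obtain ⟨s0, hs0mem, hs0⟩ := hB
    have hT : 0 < T := lt_of_le_of_lt ht.1 ht.2
    set B : Set ℝ := {s | s ∈ Icc (0:ℝ) t ∧ -1 < y' s} with hBdef
    have hBne : B.Nonempty := ⟨s0, hs0mem, hs0⟩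
    have hBsub : B ⊆ Icc 0 t := fun s hs => hs.1
    have hBsubT : B ⊆ Ico 0 T := fun s hs => ⟨hs.1.1, lt_of_le_of_lt hs.1.2 ht.2⟩
    have hBbdd : BddBelow B := ⟨0, fun s hs => hs.1.1⟩
    set t1 := sInf B with ht1def
    have ht1cl : t1 ∈ closure B := csInf_mem_closure hBne hBbdd
    have ht1mem : t1 ∈ Icc 0 t := isClosed_Icc.closure_subset_iff.mpr hBsub ht1cl
    have ht1T : t1 ∈ Ico 0 T := ⟨ht1mem.1, lt_of_le_of_lt ht1mem.2 ht.2⟩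
    have hy't1 : -1 ≤ y' t1 := by
      haveI hne : (𝓝[B] t1).NeBot := mem_closure_iff_nhdsWithin_neBot.mp ht1cl
      have htd : Tendsto y' (𝓝[B] t1) (𝓝 (y' t1)) :=
        (hCy' hsol t1 ht1T).mono_left (nhdsWithin_mono _ hBsubT)
      exact ge_of_tendsto htd (eventually_nhdsWithin_of_forall fun s hs => hs.2.le)
    have hlow : ∀ s, 0 ≤ s → s < t1 → y' s ≤ -1 := by
      intro s hs0' hst1
      by_contra hgt
      push_neg at hgt
      have : s ∈ B := ⟨⟨hs0', le_trans hst1.le ht1mem.2⟩, hgt⟩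
      exact absurd (csInf_le hBbdd this) (not_le.mpr hst1)
    have htpos : 0 < t := by
      rcases ht.1.lt_or_eq with h' | h'
      · exact h'
      · exfalso
        have hs00 : s0 = 0 := le_antisymm (h' ▸ hs0mem.2) hs0mem.1
        rw [hs00, hy'0] at hs0
        exact lt_irrefl _ hs0
    -- t1 is positive
    have ht1pos : 0 < t1 := by
      have hcy0 : ContinuousWithinAt (fun s => h (y s)) (Ico 0 T) 0 :=
        hcont.continuousAt.comp_continuousWithinAt (hCy hsol 0 ⟨le_refl 0, hT⟩)
      have hval : h (y 0) < 0 := by rw [hy0]; exact hneg (-1) le_rfl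
      have hev : ∀ᶠ s in 𝓝[Ico (0:ℝ) T] 0, h (y s) < 0 := hcy0.eventually_lt_const hval
      rw [nhdsWithin_Ico_eq_nhdsGE hT] at hev
      rw [eventually_iff] at hev
      obtain ⟨u, hu0, hsub⟩ := mem_nhdsGE_iff_exists_Icc_subset.mp hev
      set a := min u t with hadef
      have ha0 : 0 < a := lt_min hu0 htpos
      have hat : a ≤ t := min_le_right _ _
      have hsa : StrictAntiOn y' (Icc 0 a) := by
        apply strictAnti_aux ((hCy' hsol).mono
          (fun s hs => ⟨hs.1, lt_of_le_of_lt (le_trans hs.2 hat) ht.2⟩))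
          (fun x hx => hDy' hsol x ⟨hx.1, lt_of_lt_of_le hx.2 (le_trans hat ht.2.le)⟩)
        intro x hx
        exact hsub ⟨hx.1.le, le_trans hx.2.le (min_le_left _ _)⟩
      have hab : ∀ b ∈ B, a ≤ b := by
        intro b hb
        by_contra hba
        push_neg at hba
        rcases hb.1.1.lt_or_eq with hb0' | hb0'
        · have hlt := hsa ⟨le_refl 0, ha0.le⟩ ⟨hb.1.1, hba.le⟩ hb0'
          rw [hy'0] at hlt
          exact absurd hb.2 (not_lt.mpr hlt.le)
        · have : (-1:ℝ) < y' 0 := hb0' ▸ hb.2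
          rw [hy'0] at this
          exact lt_irrefl _ this
      exact lt_of_lt_of_le ha0 (le_csInf hBne hab)
    -- contradiction at t1
    have hanti : AntitoneOn y (Icc 0 t1) := by
      apply anti_aux ((hCy hsol).mono (fun s hs => ⟨hs.1, lt_of_le_of_lt hs.2 ht1T.2⟩))
        (fun x hx => hDy hsol x ⟨hx.1, lt_trans hx.2 ht1T.2⟩)
      intro x hx
      have := hlow x hx.1.le hx.2
      linarith
    have hyle : ∀ s ∈ Icc (0:ℝ) t1, y s ≤ -1 := by
      intro s hs
      have := hanti (left_mem_Icc.mpr ht1mem.1) hs hs.1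
      rw [hy0] at this
      exact this
    have hsa2 : StrictAntiOn y' (Icc 0 t1) := by
      apply strictAnti_aux ((hCy' hsol).mono (fun s hs => ⟨hs.1, lt_of_le_of_lt hs.2 ht1T.2⟩))
        (fun x hx => hDy' hsol x ⟨hx.1, lt_trans hx.2 ht1T.2⟩)
      intro x hx
      exact hneg _ (hyle x ⟨hx.1.le, hx.2.le⟩)
    have := hsa2 (left_mem_Icc.mpr ht1mem.1) (right_mem_Icc.mpr ht1mem.1) ht1pos
    rw [hy'0] at this
    linarith
  intro t ht
  refine ⟨?_, key t ht t ⟨ht.1, le_refl t⟩⟩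
  have hanti : AntitoneOn y (Icc 0 t) := by
    apply anti_aux ((hCy hsol).mono (fun s hs => ⟨hs.1, lt_of_le_of_lt hs.2 ht.2⟩))
      (fun x hx => hDy hsol x ⟨hx.1, lt_trans hx.2 ht.2⟩)
    intro x hx
    have := key t ht x ⟨hx.1.le, hx.2.le⟩
    linarith
  have := hanti (left_mem_Icc.mpr ht.1) (right_mem_Icc.mpr ht.1) ht.1
  rw [hy0] at this
  exact this

lemma mono_aux {f g : ℝ → ℝ} {a b : ℝ}
    (hf : ContinuousOn f (Icc a b))
    (hd : ∀ x ∈ Ioo a b, HasDerivAt f (g x) x)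
    (hg : ∀ x ∈ Ioo a b, 0 ≤ g x) : MonotoneOn f (Icc a b) := by
  apply monotoneOn_of_deriv_nonneg (convex_Icc a b) hf
  · intro x hx
    rw [interior_Icc] at hx
    exact (hd x hx).differentiableAt.differentiableWithinAt
  · intro x hx
    rw [interior_Icc] at hx
    rw [(hd x hx).deriv]
    exact hg x hx

lemma hneg_of_hbound (hε : 0 < ε) (hbound : ∀ u : ℝ, u ≤ -1 → h u < -ε * |u| ^ (1 + δ)) :
    ∀ u : ℝ, u ≤ -1 → h u < 0 := by
  intro u hu
  have h1 : (0:ℝ) ≤ |u| ^ (1 + δ) := Real.rpow_nonneg (abs_nonneg u) _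
  have := hbound u hu
  nlinarith

lemma time_bound (hε : 0 < ε) (hδ : 0 < δ)
    (hcont : Continuous h)
    (hbound : ∀ u : ℝ, u ≤ -1 → h u < -ε * |u| ^ (1 + δ))
    (hsol : SolOnIco h T y y') (hy0 : y 0 = -1) (hy'0 : y' 0 = -1) :
    T ≤ 2 / (δ * Real.sqrt (min (2 * ε / (2 + δ)) 1)) + 1 := by
  set c : ℝ := 2 * ε / (2 + δ) with hcdef
  have hc0 : 0 < c := by positivity
  set c0 : ℝ := min c 1 with hc0def
  have hc0pos : 0 < c0 := lt_min hc0 one_pos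
  set k : ℝ := δ / 2 * Real.sqrt c0 with hkdef
  have hsq : 0 < Real.sqrt c0 := Real.sqrt_pos.mpr hc0pos
  have hk : 0 < k := by positivity
  have hA := stepA hcont (hneg_of_hbound hε hbound) hsol hy0 hy'0
  -- main claim
  have claim : ∀ t ∈ Ico (0:ℝ) T, k * t < 1 := by
    intro t ht
    have hsubset : Icc (0:ℝ) t ⊆ Ico 0 T := fun x hx => ⟨hx.1, lt_of_le_of_lt hx.2 ht.2⟩
    have hIoosub : Ioo (0:ℝ) t ⊆ Ioo 0 T := fun x hx => ⟨hx.1, lt_trans hx.2 ht.2⟩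
    -- pointwise facts
    have hyx : ∀ x ∈ Icc (0:ℝ) t, y x ≤ -1 := fun x hx => (hA x (hsubset hx)).1
    have hy'x : ∀ x ∈ Icc (0:ℝ) t, y' x ≤ -1 := fun x hx => (hA x (hsubset hx)).2
    have huge : ∀ x ∈ Icc (0:ℝ) t, (1:ℝ) ≤ -y x := fun x hx => by linarith [hyx x hx]
    have hune : ∀ x ∈ Icc (0:ℝ) t, -y x ≠ 0 := fun x hx => by linarith [huge x hx]
    -- the energy function
    set G : ℝ → ℝ := fun s => (y' s) ^ 2 - c * (-y s) ^ (2 + δ) with hGdef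
    have hGd : ∀ x ∈ Ioo (0:ℝ) t,
        HasDerivAt G (2 * y' x * h (y x) - c * ((2 + δ) * (-y x) ^ (1 + δ) * (-(y' x)))) x := by
      intro x hx
      have hxT := hIoosub hx
      have hxI : x ∈ Icc (0:ℝ) t := ⟨hx.1.le, hx.2.le⟩
      have h1 : HasDerivAt (fun s => (y' s) ^ 2) (2 * y' x * h (y x)) x :=
        ((hDy' hsol x hxT).pow 2).congr_deriv (by push_cast; ring)
      have h2 : HasDerivAt (fun s => (-y s) ^ (2 + δ))
          ((2 + δ) * (-y x) ^ (1 + δ) * (-(y' x))) x := by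
        have houter := Real.hasDerivAt_rpow_const (x := -y x) (p := 2 + δ)
          (Or.inl (hune x hxI))
        have hinner : HasDerivAt (fun s => -y s) (-(y' x)) x := (hDy hsol x hxT).neg
        have := houter.comp x hinner
        rw [show (2 + δ - 1 : ℝ) = 1 + δ by ring] at this
        exact this
      exact h1.sub (h2.const_mul c)
    have hGmono : MonotoneOn G (Icc 0 t) := by
      apply mono_aux
      · apply ContinuousOn.sub
        · exact (((hCy' hsol).mono hsubset).pow 2)
        · exact continuousOn_const.mul
            (ContinuousOn.rpow_const (((hCy hsol).mono hsubset).neg)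
              (fun x hx => Or.inl (hune x hx)))
      · exact hGd
      · intro x hx
        have hxI : x ∈ Icc (0:ℝ) t := ⟨hx.1.le, hx.2.le⟩
        have hb : h (y x) < -ε * (-y x) ^ (1 + δ) := by
          have := hbound (y x) (hyx x hxI)
          rwa [abs_of_nonpos (by linarith [hyx x hxI])] at this
        have hApos : (1:ℝ) ≤ (-y x) ^ (1 + δ) :=
          Real.one_le_rpow (huge x hxI) (by linarith)
        have hc2 : c * (2 + δ) = 2 * ε := by
          rw [hcdef]; field_simp
        rw [show c * ((2 + δ) * (-y x) ^ (1 + δ) * (-(y' x)))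
            = (c * (2 + δ)) * ((-y x) ^ (1 + δ) * (-(y' x))) by ring, hc2]
        have key1 : 0 < (-(y' x)) * ((-ε * (-y x) ^ (1 + δ)) - h (y x)) :=
          mul_pos (by linarith [hy'x x hxI]) (by linarith)
        nlinarith [key1]
    -- lower bound on -y'
    have hG0 : G 0 = 1 - c := by
      rw [hGdef]
      simp only [hy0, hy'0]
      norm_num [Real.one_rpow]
    have hwlow : ∀ x ∈ Icc (0:ℝ) t,
        Real.sqrt c0 * (-y x) ^ ((2 + δ) / 2) ≤ -(y' x) := by
      intro x hx
      have hGx : 1 - c ≤ G x := by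
        rw [← hG0]
        exact hGmono (left_mem_Icc.mpr (le_trans hx.1 hx.2)) hx hx.1
      set U : ℝ := (-y x) ^ (2 + δ) with hUdef
      have hU1 : (1:ℝ) ≤ U := Real.one_le_rpow (huge x hx) (by linarith)
      have step1 : c0 * U ≤ (y' x) ^ 2 := by
        have hGx' : 1 - c ≤ (y' x) ^ 2 - c * U := hGx
        have h1 : c0 ≤ c := min_le_left _ _
        have h2 : c0 ≤ 1 := min_le_right _ _
        nlinarith [mul_nonneg (sub_nonneg.mpr h1) (sub_nonneg.mpr hU1)]
      have step2 : Real.sqrt (c0 * U) ≤ -(y' x) := by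
        have := Real.sqrt_le_sqrt step1
        rwa [Real.sqrt_sq_eq_abs, abs_of_nonpos (by linarith [hy'x x hx])] at this
      have step3 : Real.sqrt (c0 * U) = Real.sqrt c0 * (-y x) ^ ((2 + δ) / 2) := by
        rw [Real.sqrt_mul hc0pos.le]
        congr 1
        rw [Real.sqrt_eq_rpow, hUdef, ← Real.rpow_mul (by linarith [huge x hx])]
        ring_nf
      linarith [step3 ▸ step2]
    -- the function v = (-y)^(-δ/2)
    set v : ℝ → ℝ := fun s => (-y s) ^ (-(δ / 2)) with hvdef
    set F : ℝ → ℝ := fun s => v s + k * s with hFdef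
    have hFanti : AntitoneOn F (Icc 0 t) := by
      apply anti_aux (g := fun x =>
          (-(δ / 2)) * (-y x) ^ (-(δ / 2) - 1) * (-(y' x)) + k)
      · apply ContinuousOn.add
        · exact ((hCy hsol).mono hsubset).neg.rpow_const (fun x hx => Or.inl (hune x hx))
        · exact continuousOn_const.mul continuousOn_id
      · intro x hx
        have hxT := hIoosub hx
        have hxI : x ∈ Icc (0:ℝ) t := ⟨hx.1.le, hx.2.le⟩
        have houter := Real.hasDerivAt_rpow_const (x := -y x) (p := -(δ / 2))
          (Or.inl (hune x hxI))
        have hinner : HasDerivAt (fun s => -y s) (-(y' x)) x := (hDy hsol x hxT).neg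
        have hcomp := houter.comp x hinner
        exact (hcomp.add ((hasDerivAt_id x).const_mul k)).congr_deriv (by ring)
      · intro x hx
        have hxI : x ∈ Icc (0:ℝ) t := ⟨hx.1.le, hx.2.le⟩
        have hupos : (0:ℝ) < -y x := by linarith [huge x hxI]
        set P : ℝ := (-y x) ^ (-(δ / 2) - 1) with hPdef
        have hPpos : 0 < P := Real.rpow_pos_of_pos hupos _
        have hPQ : P * (-y x) ^ ((2 + δ) / 2) = 1 := by
          rw [hPdef, ← Real.rpow_add hupos,
            show (-(δ / 2) - 1) + (2 + δ) / 2 = (0:ℝ) by ring, Real.rpow_zero]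
        have hmul : (-(δ / 2) * P) * (-(y' x))
            ≤ (-(δ / 2) * P) * (Real.sqrt c0 * (-y x) ^ ((2 + δ) / 2)) := by
          apply mul_le_mul_of_nonpos_left (hwlow x hxI)
          nlinarith
        have heq : (-(δ / 2) * P) * (Real.sqrt c0 * (-y x) ^ ((2 + δ) / 2)) = -k := by
          rw [show (-(δ / 2) * P) * (Real.sqrt c0 * (-y x) ^ ((2 + δ) / 2))
              = -(δ / 2) * Real.sqrt c0 * (P * (-y x) ^ ((2 + δ) / 2)) by ring, hPQ, hkdef]
          ring
        have : -(δ / 2) * P * (-(y' x)) ≤ -k := heq ▸ hmul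
        linarith
    have hF0 : F 0 = 1 := by
      rw [hFdef]
      simp only [hvdef, hy0]
      norm_num [Real.one_rpow]
    have hvt : 0 < v t := Real.rpow_pos_of_pos (by linarith [huge t ⟨ht.1, le_refl t⟩]) _
    have hFt : F t ≤ 1 := by
      rw [← hF0]
      exact hFanti (left_mem_Icc.mpr ht.1) (right_mem_Icc.mpr ht.1) ht.1
    have : v t + k * t ≤ 1 := hFt
    linarith
  -- conclude
  by_contra hTbig
  push_neg at hTbig
  have hkinv : 2 / (δ * Real.sqrt c0) = 1 / k := by
    rw [hkdef]; field_simp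
  rw [hkinv] at hTbig
  have ht : (1 / k) ∈ Ico (0:ℝ) T := ⟨by positivity, by linarith⟩
  have := claim _ ht
  rw [mul_one_div, div_self hk.ne'] at this
  exact lt_irrefl _ this


lemma anti_aux_Ico {f g : ℝ → ℝ} {a b : ℝ}
    (hf : ContinuousOn f (Ico a b))
    (hd : ∀ x ∈ Ioo a b, HasDerivAt f (g x) x)
    (hg : ∀ x ∈ Ioo a b, g x ≤ 0) : AntitoneOn f (Ico a b) := by
  apply antitoneOn_of_deriv_nonpos (convex_Ico a b) hf
  · intro x hx
    rw [interior_Ico] at hx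
    exact (hd x hx).differentiableAt.differentiableWithinAt
  · intro x hx
    rw [interior_Ico] at hx
    rw [(hd x hx).deriv]
    exact hg x hx

lemma extension (hT : 0 < T) (hh : ContDiff ℝ (⊤ : ℕ∞) h)
    (hneg : ∀ u : ℝ, u ≤ -1 → h u < 0)
    (hsol : SolOnIco h T y y') (hy0 : y 0 = -1) (hy'0 : y' 0 = -1)
    (B : ℝ) (hbb : ∀ s ∈ Ico (0:ℝ) T, B ≤ y s) :
    ∃ T' : ℝ, T < T' ∧ ∃ z z' : ℝ → ℝ,
      SolOnIco h T' z z' ∧ Set.EqOn z y (Set.Ico (0:ℝ) T) := by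
  have hcont : Continuous h := hh.continuous
  have hA := stepA hcont hneg hsol hy0 hy'0
  have hB1 : B ≤ -1 := by
    have := hbb 0 ⟨le_refl 0, hT⟩
    rw [hy0] at this
    exact this
  have hmemBI : ∀ s ∈ Ico (0:ℝ) T, y s ∈ Icc B (-1) :=
    fun s hs => ⟨hbb s hs, (hA s hs).1⟩
  -- bound on h on the compact range
  obtain ⟨C, hC⟩ := (isCompact_Icc (a := B) (b := (-1:ℝ))).exists_bound_of_continuousOn
    hcont.continuousOn
  have hC0 : 0 ≤ C := le_trans (norm_nonneg _) (hC (-1) ⟨hB1, le_refl _⟩)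
  -- lower bound on y'
  have hy'low : ∀ s ∈ Ico (0:ℝ) T, -1 - C * T ≤ y' s := by
    intro s hs
    have hmono : MonotoneOn (fun r => y' r + C * r) (Icc 0 s) := by
      apply mono_aux (g := fun x => h (y x) + C)
      · exact (((hCy' hsol).mono (fun x hx => ⟨hx.1, lt_of_le_of_lt hx.2 hs.2⟩)).add
          (continuousOn_const.mul continuousOn_id))
      · intro x hx
        have hxT : x ∈ Ioo (0:ℝ) T := ⟨hx.1, lt_trans hx.2 hs.2⟩
        exact ((hDy' hsol x hxT).add ((hasDerivAt_id x).const_mul C)).congr_deriv (by ring)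
      · intro x hx
        have hxT : x ∈ Ico (0:ℝ) T := ⟨hx.1.le, lt_trans hx.2 hs.2⟩
        have := hC (y x) (hmemBI x hxT)
        rw [Real.norm_eq_abs, abs_le] at this
        linarith [this.1]
    have := hmono (left_mem_Icc.mpr hs.1) (right_mem_Icc.mpr hs.1) hs.1
    simp only [] at this
    rw [hy'0] at this
    have hsT : s ≤ T := hs.2.le
    nlinarith
  -- monotonicity
  have hantiy : AntitoneOn y (Ico 0 T) := by
    apply anti_aux_Ico (g := y') (hCy hsol) (hDy hsol)
    intro x hx
    linarith [(hA x ⟨hx.1.le, hx.2⟩).2]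
  have hantiy' : AntitoneOn y' (Ico 0 T) := by
    apply anti_aux_Ico (g := fun x => h (y x)) (hCy' hsol) (hDy' hsol)
    intro x hx
    exact (hneg _ (hA x ⟨hx.1.le, hx.2⟩).1).le
  -- limits at T
  have hIoo_ne : (Ioo (0:ℝ) T).Nonempty := nonempty_Ioo.mpr hT
  have hbddy : BddBelow (y '' Ioo 0 T) := by
    refine ⟨B, ?_⟩
    rintro r ⟨x, hx, rfl⟩
    exact hbb x ⟨hx.1.le, hx.2⟩
  have hbddy' : BddBelow (y' '' Ioo 0 T) := by
    refine ⟨-1 - C * T, ?_⟩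
    rintro r ⟨x, hx, rfl⟩
    exact hy'low x ⟨hx.1.le, hx.2⟩
  set L : ℝ := sInf (y '' Ioo 0 T) with hLdef
  set w : ℝ := sInf (y' '' Ioo 0 T) with hwdef
  have hyL : Tendsto y (𝓝[<] T) (𝓝 L) :=
    AntitoneOn.tendsto_nhdsWithin_Ioo_left hIoo_ne
      (hantiy.mono Ioo_subset_Ico_self) hbddy
  have hy'w : Tendsto y' (𝓝[<] T) (𝓝 w) :=
    AntitoneOn.tendsto_nhdsWithin_Ioo_left hIoo_ne
      (hantiy'.mono Ioo_subset_Ico_self) hbddy'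
  -- Picard-Lindelof
  set F : ℝ × ℝ → ℝ × ℝ := fun p => (p.2, h p.1) with hFdef
  have hF : ContDiff ℝ 1 F :=
    (contDiff_snd).prodMk ((hh.of_le (by simp)).comp contDiff_fst)
  obtain ⟨f, hfT, ε', hε', hode⟩ :=
    ContDiffAt.exists_forall_mem_closedBall_exists_eq_forall_mem_Ioo_hasDerivAt₀ (f := F) (x₀ := (L, w)) hF.contDiffAt T
  set z1 : ℝ → ℝ := fun t => (f t).1 with hz1def
  set z2 : ℝ → ℝ := fun t => (f t).2 with hz2def
  have hz1 : ∀ t ∈ Ioo (T - ε') (T + ε'), HasDerivAt z1 (z2 t) t := by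
    intro t ht'
    exact (ContinuousLinearMap.fst ℝ ℝ ℝ).hasFDerivAt.comp_hasDerivAt t (hode t ht')
  have hz2 : ∀ t ∈ Ioo (T - ε') (T + ε'), HasDerivAt z2 (h (z1 t)) t := by
    intro t ht'
    exact (ContinuousLinearMap.snd ℝ ℝ ℝ).hasFDerivAt.comp_hasDerivAt t (hode t ht')
  have hz1T : z1 T = L := by rw [hz1def]; simp [hfT]
  have hz2T : z2 T = w := by rw [hz2def]; simp [hfT]
  have hTmem : T ∈ Ioo (T - ε') (T + ε') := ⟨by linarith, by linarith⟩
  set T' : ℝ := T + ε' / 2 with hT'def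
  have hTT' : T < T' := by rw [hT'def]; linarith
  -- the glued functions
  set Y : ℝ → ℝ := fun s => if s < T then y s else z1 s with hYdef
  set Y' : ℝ → ℝ := fun s => if s < T then y' s else z2 s with hY'def
  have hYeq : Set.EqOn Y y (Set.Ico (0:ℝ) T) := fun s hs => if_pos hs.2
  have hYT : Y T = L := by rw [hYdef]; simp [hz1T]
  have hY'T : Y' T = w := by rw [hY'def]; simp [hz2T]
  have hYx : ∀ x ∈ Ioo (0:ℝ) T, HasDerivAt Y (y' x) x := fun x hx =>
    (hDy hsol x hx).congr_of_eventuallyEq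
      (eventuallyEq_of_mem (Iio_mem_nhds hx.2) (fun s hs => if_pos hs))
  have hY'x : ∀ x ∈ Ioo (0:ℝ) T, HasDerivAt Y' (h (y x)) x := fun x hx =>
    (hDy' hsol x hx).congr_of_eventuallyEq
      (eventuallyEq_of_mem (Iio_mem_nhds hx.2) (fun s hs => if_pos hs))
  have hIooT : Ioo (0:ℝ) T ∈ 𝓝[<] T := Ioo_mem_nhdsLT_of_mem ⟨hT, le_refl T⟩
  -- derivative of Y at T from the left
  have hYIic : HasDerivWithinAt Y w (Iic T) T := by
    apply hasDerivWithinAt_Iic_of_tendsto_deriv (s := Ioo 0 T)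
    · intro x hx
      exact (hYx x hx).differentiableAt.differentiableWithinAt
    · show Tendsto Y (𝓝[Ioo (0:ℝ) T] T) (𝓝 (Y T))
      rw [hYT]
      exact Tendsto.congr'
        (eventually_nhdsWithin_of_forall (fun x hx => (if_pos hx.2).symm))
        (hyL.mono_left (nhdsWithin_mono _ Ioo_subset_Iio_self))
    · exact hIooT
    · exact Tendsto.congr'
        (eventually_of_mem hIooT (fun x hx => ((hYx x hx).deriv).symm)) hy'w
  have hYIci : HasDerivWithinAt Y w (Ici T) T := by
    have hd : HasDerivAt z1 w T := by
      have := hz1 T hTmem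
      rwa [hz2T] at this
    exact hd.hasDerivWithinAt.congr
      (fun s hs => if_neg (not_lt.mpr hs)) (if_neg (lt_irrefl T))
  have hYunion : HasDerivWithinAt Y w (Ico 0 T') T := by
    apply (hYIic.union hYIci).mono
    intro x _
    rcases le_total x T with hc | hc
    · exact Or.inl hc
    · exact Or.inr hc
  -- derivative of Y' at T
  have hY'Iic : HasDerivWithinAt Y' (h L) (Iic T) T := by
    apply hasDerivWithinAt_Iic_of_tendsto_deriv (s := Ioo 0 T)
    · intro x hx
      exact (hY'x x hx).differentiableAt.differentiableWithinAt
    · show Tendsto Y' (𝓝[Ioo (0:ℝ) T] T) (𝓝 (Y' T))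
      rw [hY'T]
      exact Tendsto.congr'
        (eventually_nhdsWithin_of_forall (fun x hx => (if_pos hx.2).symm))
        (hy'w.mono_left (nhdsWithin_mono _ Ioo_subset_Iio_self))
    · exact hIooT
    · exact Tendsto.congr'
        (eventually_of_mem hIooT (fun x hx => ((hY'x x hx).deriv).symm))
        ((hcont.tendsto L).comp hyL)
  have hY'Ici : HasDerivWithinAt Y' (h L) (Ici T) T := by
    have hd : HasDerivAt z2 (h L) T := by
      have := hz2 T hTmem
      rwa [hz1T] at this
    exact hd.hasDerivWithinAt.congr
      (fun s hs => if_neg (not_lt.mpr hs)) (if_neg (lt_irrefl T))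
  have hY'union : HasDerivWithinAt Y' (h L) (Ico 0 T') T := by
    apply (hY'Iic.union hY'Ici).mono
    intro x _
    rcases le_total x T with hc | hc
    · exact Or.inl hc
    · exact Or.inr hc
  have hIeq : Ico (0:ℝ) T' ∩ Iio T = Ico 0 T := by
    rw [Ico_inter_Iio, min_eq_right hTT'.le]
  -- the solution property
  refine ⟨T', hTT', Y, Y', ⟨?_, ?_⟩, hYeq⟩
  · intro t ht'
    rcases lt_trichotomy t T with hlt | heq | hgt
    · have h1 : HasDerivWithinAt Y (y' t) (Ico 0 T) t :=
        (hsol.1 t ⟨ht'.1, hlt⟩).congr (fun s hs => if_pos hs.2) (if_pos hlt)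
      rw [← hIeq] at h1
      have h2 := (hasDerivWithinAt_inter (Iio_mem_nhds hlt)).mp h1
      rw [show Y' t = y' t from if_pos hlt]
      exact h2
    · rw [heq, hY'T]
      exact hYunion
    · have hd : HasDerivAt z1 (z2 t) t :=
        hz1 t ⟨by linarith, by rw [hT'def] at ht'; linarith [ht'.2]⟩
      have hd2 : HasDerivAt Y (z2 t) t :=
        hd.congr_of_eventuallyEq (eventuallyEq_of_mem (Ioi_mem_nhds hgt)
          (fun s hs => if_neg (not_lt.mpr (le_of_lt hs))))
      rw [show Y' t = z2 t from if_neg (not_lt.mpr hgt.le)]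
      exact hd2.hasDerivWithinAt
  · intro t ht'
    rcases lt_trichotomy t T with hlt | heq | hgt
    · have h1 : HasDerivWithinAt Y' (h (Y t)) (Ico 0 T) t := by
        rw [show Y t = y t from if_pos hlt]
        exact (hsol.2 t ⟨ht'.1, hlt⟩).congr (fun s hs => if_pos hs.2) (if_pos hlt)
      rw [← hIeq] at h1
      exact (hasDerivWithinAt_inter (Iio_mem_nhds hlt)).mp h1
    · rw [heq, show Y T = L from hYT]
      exact hY'union
    · have hd : HasDerivAt z2 (h (z1 t)) t :=
        hz2 t ⟨by linarith, by rw [hT'def] at ht'; linarith [ht'.2]⟩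
      have hd2 : HasDerivAt Y' (h (z1 t)) t :=
        hd.congr_of_eventuallyEq (eventuallyEq_of_mem (Ioi_mem_nhds hgt)
          (fun s hs => if_neg (not_lt.mpr (le_of_lt hs))))
      rw [show Y t = z1 t from if_neg (not_lt.mpr hgt.le)]
      exact hd2.hasDerivWithinAt

end BlowupAux

/-- If `h` is smooth with `h(u) < -ε |u|^{1+δ}` for `u ≤ -1` (with `ε, δ > 0`),
then the maximal solution of `y'' = h(y)`, `y(0) = -1`, `y'(0) = -1` blows up
in finite time: there is no global solution on `[0,∞)`, and every maximal
solution on a finite interval `[0,T)` satisfies `y(t) → -∞` as `t → T`. -/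
theorem superlinear_finite_time_blowup (ε δ : ℝ) (hε : 0 < ε) (hδ : 0 < δ)
    (h : ℝ → ℝ) (hh : ContDiff ℝ (⊤ : ℕ∞) h)
    (hbound : ∀ u : ℝ, u ≤ -1 → h u < -ε * |u| ^ (1 + δ)) :
    (¬ ∃ y y' : ℝ → ℝ, SolOnIci h y y' ∧ y 0 = -1 ∧ y' 0 = -1) ∧
    (∀ T : ℝ, 0 < T → ∀ y y' : ℝ → ℝ, SolOnIco h T y y' →
      y 0 = -1 → y' 0 = -1 →
      (¬ ∃ T' : ℝ, T < T' ∧ ∃ z z' : ℝ → ℝ,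
        SolOnIco h T' z z' ∧ Set.EqOn z y (Set.Ico (0:ℝ) T)) →
      Tendsto y (𝓝[<] T) atBot) := by
  constructor
  · rintro ⟨y, y', hsol, hy0, hy'0⟩
    set M : ℝ := 2 / (δ * Real.sqrt (min (2 * ε / (2 + δ)) 1)) + 1 with hMdef
    have hsol' : SolOnIco h (M + 1) y y' :=
      ⟨fun t ht => (hsol.1 t ((Set.Ico_subset_Ici_self) ht)).mono Set.Ico_subset_Ici_self,
       fun t ht => (hsol.2 t ((Set.Ico_subset_Ici_self) ht)).mono Set.Ico_subset_Ici_self⟩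
    have := BlowupAux.time_bound hε hδ hh.continuous hbound hsol' hy0 hy'0
    rw [← hMdef] at this
    linarith
  · intro T hT y y' hsol hy0 hy'0 hnoext
    have hneg : ∀ u : ℝ, u ≤ -1 → h u < 0 := BlowupAux.hneg_of_hbound hε hbound
    by_cases hbdd : ∃ B : ℝ, ∀ s ∈ Set.Ico (0:ℝ) T, B ≤ y s
    · obtain ⟨B, hbb⟩ := hbdd
      exact absurd (BlowupAux.extension hT hh hneg hsol hy0 hy'0 B hbb) hnoext
    · push_neg at hbdd
      have hA := BlowupAux.stepA hh.continuous hneg hsol hy0 hy'0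
      have hanti : AntitoneOn y (Set.Ico 0 T) := by
        apply BlowupAux.anti_aux_Ico (g := y') (BlowupAux.hCy hsol) (BlowupAux.hDy hsol)
        intro x hx
        linarith [(hA x ⟨hx.1.le, hx.2⟩).2]
      rw [tendsto_atBot]
      intro b
      obtain ⟨s0, hs0, hys0⟩ := hbdd b
      filter_upwards [Ioo_mem_nhdsLT_of_mem ⟨hs0.2, le_refl T⟩] with x hx
      exact le_of_lt (lt_of_lt_of_le (lt_of_le_of_lt
        (hanti hs0 ⟨le_trans hs0.1 hx.1.le, hx.2⟩ hx.1.le) hys0) (le_refl b))
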